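/- Unfolding next against lseg: if s satisfies x ≃ x' (collision) and s,h ⊨ lseg(x',z), and h = h₁ ∗ h₂ with s,h₁ ⊨ next(x,y), then s,h₂ ⊨ lseg(y,z). -/

import Mathlib

def Heap := ℤ → Option ℤ
def Stack := String → ℤ

def hemp : Heap := fun _ => none
def hsingle (a v : ℤ) : Heap := fun l => if l = a then some v else none
def hdisj (h₁ h₂ : Heap) : Prop := ∀ l, h₁ l = none ∨ h₂ l = none
def hunion (h₁ h₂ : Heap) : Heap := fun l =>
  match h₁ l with
  | some v => some v
  | none => h₂ l
def hdom (h : Heap) : Set ℤ := {l | h l ≠ none}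

/-- Acyclic list segment: `Lseg a b h` means `h` is a list segment from `a` to `b`. -/
inductive Lseg : ℤ → ℤ → Heap → Prop
  | nil (a : ℤ) : Lseg a a hemp
  | cons {a b c : ℤ} {h : Heap} (hne : a ≠ b) (hfresh : h a = none)
      (ht : Lseg c b h) : Lseg a b (hunion (hsingle a c) h)

/-- Spatial predicates. -/
inductive SP where
  | emp : SP
  | next (x y : String) : SP
  | lseg (x y : String) : SP

/-- Satisfaction of a single spatial predicate. -/
def sat (s : Stack) (h : Heap) : SP → Prop
  | .emp => h = hemp
  | .next x y => h = hsingle (s x) (s y)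
  | .lseg x y => Lseg (s x) (s y) h

/-- Satisfaction of a spatial conjunction (list of predicates). -/
def satList (s : Stack) (h : Heap) : List SP → Prop
  | [] => h = hemp
  | S :: Sg => ∃ h₁ h₂, hdisj h₁ h₂ ∧ h = hunion h₁ h₂ ∧ sat s h₁ S ∧ satList s h₂ Sg

/-- Emptiness condition of a spatial predicate. -/
def emptyCond (s : Stack) : SP → Prop
  | .emp => True
  | .next _ _ => False
  | .lseg x y => s x = s y

/-- Address of a spatial predicate (dummy value 0 for `emp`, which is always empty). -/
def addrVal (s : Stack) : SP → ℤ
  | .emp => 0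
  | .next x _ => s x
  | .lseg x _ => s x

def collide (s : Stack) (S S' : SP) : Prop :=
  ¬ emptyCond s S ∧ ¬ emptyCond s S' ∧ addrVal s S = addrVal s S'

def wellFormed (s : Stack) (Sg : List SP) : Prop :=
  List.Pairwise (fun S S' => ¬ collide s S S') Sg

theorem hunion_hsingle_self (a v : ℤ) (h : Heap) : hunion (hsingle a v) h a = some v := by
  simp [hunion, hsingle]

theorem hunion_hsingle_of_ne {a l : ℤ} (v : ℤ) (h : Heap) (hl : l ≠ a) :
    hunion (hsingle a v) h l = h l := by
  simp [hunion, hsingle, hl]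

theorem hunion_hsingle_injective {a v w : ℤ} {h t : Heap} (hh : h a = none) (ht : t a = none)
    (heq : hunion (hsingle a v) h = hunion (hsingle a w) t) : v = w ∧ h = t := by
  refine ⟨?_, funext fun l => ?_⟩
  · simpa only [hunion_hsingle_self, Option.some.injEq] using congrFun heq a
  · by_cases hla : l = a
    · rw [hla, hh, ht]
    · simpa only [hunion_hsingle_of_ne _ _ hla] using congrFun heq l

theorem Lseg.tail {a b v : ℤ} {h : Heap} (hfresh : h a = none)
    (hl : Lseg a b (hunion (hsingle a v) h)) : Lseg v b h := by
  generalize hH : hunion (hsingle a v) h = H at hl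
  cases hl with
  | nil =>
    have := congrFun hH a
    simp only [hunion_hsingle_self, hemp, reduceCtorEq] at this
  | cons _ hfresh' ht =>
    obtain ⟨rfl, rfl⟩ := hunion_hsingle_injective hfresh hfresh' hH
    exact ht

theorem stmt5 (s : Stack) (h h₁ h₂ : Heap) (x x' y z : String)
    (hcol : s x = s x')
    (hl : sat s h (.lseg x' z))
    (hd : hdisj h₁ h₂) (hu : h = hunion h₁ h₂)
    (hn : sat s h₁ (.next x y)) :
    sat s h₂ (.lseg y z) := by
  simp only [sat] at hl hn ⊢
  subst hn hu
  have hfresh : h₂ (s x) = none :=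
    (hd (s x)).resolve_left (by simp [hsingle])
  rw [hcol] at hfresh hl
  exact hl.tail hfresh
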